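/- The map sending a pair (Y, Φ) ∈ Der(A) ⋊ Aut(A) to the map U_{(Y,Φ)} : A[ε] → A[ε], U_{(Y,Φ)}(f + gε) = Φ(f) + (Y(Φ(f)) + Φ(g))ε, is a group isomorphism from the semidirect product Der(A) ⋊ Aut(A) onto the group of ε-equivariant ℝ-algebra automorphisms of A[ε]. (This realizes, at the level of function algebras, the paper's assertion that the group 𝔘₁ is a semidirect product 𝔛(M) ⋊ Diff(M), with (X, Φ) corresponding to U = Φ_* + εX.) -/
import Mathlib


/- Setting: `M` is a smooth manifold and `A = C^∞(M, ℝ)` its commutative ℝ-algebra of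
smooth real-valued functions.  `A[ε] = DualNumber A` is the algebra of dual numbers over
`A` (with `ε² = 0`); an element `b` is `b.fst + b.snd·ε`.  An ℝ-algebra automorphism `U`
of `A[ε]` is ε-equivariant if `U(ε·b) = ε·U(b)` for all `b`.  `Der(A) ⋊ Aut(A)` has
multiplication `(Y, Φ)(Y′, Φ′) = (Y + Φ∘Y′∘Φ⁻¹, Φ∘Φ′)`. -/

open scoped Manifold

noncomputable section

variable {E : Type*} [NormedAddCommGroup E] [NormedSpace ℝ E]
  {HM : Type*} [TopologicalSpace HM] {IM : ModelWithCorners ℝ E HM}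
  {M : Type*} [TopologicalSpace M] [ChartedSpace HM M]

/-- `A = C^∞(M, ℝ)`, the algebra of smooth real-valued functions on `M`. -/
local notation "A" => C^(⊤:ℕ∞)⟮IM, M; ℝ⟯

/-- The map `U_{(Y,Φ)} : A[ε] → A[ε]`, `f + gε ↦ Φ(f) + (Y(Φ(f)) + Φ(g))ε`, associated
to a pair of maps `Y, Φ : A → A`. -/
def dualNumberAut (Y Φ : A → A) : DualNumber A → DualNumber A :=
  fun b => TrivSqZeroExt.inl (Φ b.fst) + TrivSqZeroExt.inr (Y (Φ b.fst) + Φ b.snd)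


open TrivSqZeroExt in
lemma fst_dualNumberAut (Y Φ : A → A) (b : DualNumber A) :
    (dualNumberAut Y Φ b).fst = Φ b.fst := by simp [dualNumberAut]

open TrivSqZeroExt in
lemma snd_dualNumberAut (Y Φ : A → A) (b : DualNumber A) :
    (dualNumberAut Y Φ b).snd = Y (Φ b.fst) + Φ b.snd := by simp [dualNumberAut]

open TrivSqZeroExt

/-- `(Y, Φ) ↦ U_{(Y,Φ)}` is a group isomorphism from the semidirect product
`Der(A) ⋊ Aut(A)` onto the group of ε-equivariant ℝ-algebra automorphisms of `A[ε]`: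
(1) each `U_{(Y,Φ)}` is an ε-equivariant ℝ-algebra automorphism of `A[ε]`;
(2) the map intertwines the semidirect product multiplication with composition;
(3) it is injective; (4) every ε-equivariant ℝ-algebra automorphism of `A[ε]` is of the
form `U_{(Y,Φ)}`. -/
theorem dualNumberAut_group_iso :
    (∀ (Y : Derivation ℝ A A) (Φ : A ≃ₐ[ℝ] A),
        Function.Bijective (dualNumberAut ⇑Y ⇑Φ) ∧
        dualNumberAut ⇑Y ⇑Φ 1 = 1 ∧
        (∀ b c, dualNumberAut ⇑Y ⇑Φ (b + c) = dualNumberAut ⇑Y ⇑Φ b + dualNumberAut ⇑Y ⇑Φ c) ∧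
        (∀ b c, dualNumberAut ⇑Y ⇑Φ (b * c) = dualNumberAut ⇑Y ⇑Φ b * dualNumberAut ⇑Y ⇑Φ c) ∧
        (∀ (t : ℝ) b, dualNumberAut ⇑Y ⇑Φ (t • b) = t • dualNumberAut ⇑Y ⇑Φ b) ∧
        (∀ b, dualNumberAut ⇑Y ⇑Φ (DualNumber.eps * b) =
          DualNumber.eps * dualNumberAut ⇑Y ⇑Φ b)) ∧
    (∀ (Y Y' : Derivation ℝ A A) (Φ Φ' : A ≃ₐ[ℝ] A),
        dualNumberAut (fun a => Y a + Φ (Y' (Φ.symm a))) (fun a => Φ (Φ' a)) =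
          (dualNumberAut ⇑Y ⇑Φ) ∘ (dualNumberAut ⇑Y' ⇑Φ')) ∧
    (∀ (Y Y' : Derivation ℝ A A) (Φ Φ' : A ≃ₐ[ℝ] A),
        dualNumberAut ⇑Y ⇑Φ = dualNumberAut ⇑Y' ⇑Φ' → Y = Y' ∧ Φ = Φ') ∧
    (∀ U : DualNumber A → DualNumber A,
        Function.Bijective U → U 1 = 1 →
        (∀ b c, U (b + c) = U b + U c) →
        (∀ b c, U (b * c) = U b * U c) →
        (∀ (t : ℝ) b, U (t • b) = t • U b) →
        (∀ b, U (DualNumber.eps * b) = DualNumber.eps * U b) →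
        ∃ (Y : Derivation ℝ A A) (Φ : A ≃ₐ[ℝ] A), U = dualNumberAut ⇑Y ⇑Φ) := by
  refine ⟨?_, ?_, ?_, ?_⟩
  · intro Y Φ
    refine ⟨?_, ?_, ?_, ?_, ?_, ?_⟩
    · refine Function.bijective_iff_has_inverse.mpr
        ⟨dualNumberAut (fun a => -(Φ.symm (Y (Φ a)))) ⇑Φ.symm, ?_, ?_⟩
      · intro b
        refine TrivSqZeroExt.ext ?_ ?_ <;>
          simp [fst_dualNumberAut, snd_dualNumberAut, map_add]
      · intro b
        refine TrivSqZeroExt.ext ?_ ?_ <;>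
          simp [fst_dualNumberAut, snd_dualNumberAut, map_add, map_neg]
    · refine TrivSqZeroExt.ext ?_ ?_ <;>
        simp [fst_dualNumberAut, snd_dualNumberAut]
    · intro b c
      refine TrivSqZeroExt.ext ?_ ?_ <;>
        simp [fst_dualNumberAut, snd_dualNumberAut, map_add] <;> abel
    · intro b c
      refine TrivSqZeroExt.ext ?_ ?_ <;>
        simp [fst_dualNumberAut, snd_dualNumberAut, snd_mul, fst_mul, map_add, map_mul,
          smul_eq_mul, MulOpposite.smul_eq_mul_unop, Derivation.leibniz]
      ring
    · intro t b
      refine TrivSqZeroExt.ext ?_ ?_ <;>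
        simp [fst_dualNumberAut, snd_dualNumberAut, map_smul]
    · intro b
      refine TrivSqZeroExt.ext ?_ ?_ <;>
        simp [fst_dualNumberAut, snd_dualNumberAut, snd_mul, fst_mul, smul_eq_mul,
          MulOpposite.smul_eq_mul_unop]
  · intro Y Y' Φ Φ'
    funext b
    refine TrivSqZeroExt.ext ?_ ?_ <;>
      simp [fst_dualNumberAut, snd_dualNumberAut, map_add] <;> abel
  · intro Y Y' Φ Φ' h
    have hΦ : ∀ f : A, Φ f = Φ' f := fun f => by
      simpa [fst_dualNumberAut] using congrArg TrivSqZeroExt.fst (congrFun h (inl f))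
    have hΦ' : Φ = Φ' := AlgEquiv.ext hΦ
    constructor
    · refine Derivation.ext fun f => ?_
      have := congrArg TrivSqZeroExt.snd (congrFun h (inl (Φ.symm f)))
      simp only [snd_dualNumberAut, snd_inl, fst_inl, map_zero, add_zero] at this
      have h2 : Φ' (Φ.symm f) = f := by rw [← hΦ, Φ.apply_symm_apply]
      rw [Φ.apply_symm_apply, h2] at this
      exact this
    · exact hΦ'
  · intro U hbij h1 hadd hmul hsmul heps
    have hU0 : U 0 = 0 := by
      have h0 := hadd 0 0
      rw [add_zero] at h0
      exact add_eq_left.mp h0.symm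
    set φ : A → A := fun f => (U (inl f)).fst with hφ
    set ψ : A → A := fun f => (U (inl f)).snd with hψ
    have hUinl : ∀ f, U (inl f) = inl (φ f) + inr (ψ f) := fun f => by
      refine TrivSqZeroExt.ext ?_ ?_ <;> simp [hφ, hψ]
    have epsmul : ∀ x : DualNumber A, DualNumber.eps * x = inr x.fst := fun x => by
      refine TrivSqZeroExt.ext ?_ ?_ <;>
        simp [snd_mul, fst_mul, smul_eq_mul, MulOpposite.smul_eq_mul_unop]
    have hUinr : ∀ g, U (inr g) = inr (φ g) := fun g => by
      have h1 : (inr g : DualNumber A) = DualNumber.eps * inl g := by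
        rw [epsmul]; simp
      rw [h1, heps, epsmul]
    have φadd : ∀ f g, φ (f + g) = φ f + φ g := fun f g => by
      simp [hφ, inl_add, hadd]
    have ψadd : ∀ f g, ψ (f + g) = ψ f + ψ g := fun f g => by
      simp [hψ, inl_add, hadd]
    have φsmul : ∀ (t : ℝ) f, φ (t • f) = t • φ f := fun t f => by
      have : (inl (t • f) : DualNumber A) = t • inl f := by
        refine TrivSqZeroExt.ext ?_ ?_ <;> simp
      simp [hφ, this, hsmul]
    have ψsmul : ∀ (t : ℝ) f, ψ (t • f) = t • ψ f := fun t f => by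
      have : (inl (t • f) : DualNumber A) = t • inl f := by
        refine TrivSqZeroExt.ext ?_ ?_ <;> simp
      simp [hψ, this, hsmul]
    have φ1 : φ 1 = 1 := by
      show (U (inl 1)).fst = 1
      rw [inl_one, h1, fst_one]
    have ψ1 : ψ 1 = 0 := by
      show (U (inl 1)).snd = 0
      rw [inl_one, h1, snd_one]
    have φ0 : φ 0 = 0 := by simp [hφ, hU0]
    have φmul : ∀ f g, φ (f * g) = φ f * φ g := fun f g => by
      have := congrArg TrivSqZeroExt.fst (hmul (inl f) (inl g))
      simpa [hφ, fst_mul] using this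
    have ψmul : ∀ f g, ψ (f * g) = φ f * ψ g + ψ f * φ g := fun f g => by
      have := congrArg TrivSqZeroExt.snd (hmul (inl f) (inl g))
      simpa [hψ, hφ, snd_mul, fst_mul, smul_eq_mul,
        MulOpposite.smul_eq_mul_unop] using this
    have φinj : Function.Injective φ := fun f g hfg => by
      have : U (inr f) = U (inr g) := by rw [hUinr, hUinr, hfg]
      have := hbij.1 this
      exact TrivSqZeroExt.inr_injective this
    have φsurj : Function.Surjective φ := fun a => by
      obtain ⟨b, hb⟩ := hbij.2 (inl a)
      refine ⟨b.fst, ?_⟩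
      have : U b = U (inl b.fst) + U (inr b.snd) := by
        rw [← hadd]; congr 1; exact (inl_fst_add_inr_snd_eq b).symm
      rw [hb, hUinl, hUinr] at this
      have := congrArg TrivSqZeroExt.fst this
      simpa using this.symm
    let Φa : A →ₐ[ℝ] A :=
      { toFun := φ
        map_one' := φ1
        map_mul' := φmul
        map_zero' := φ0
        map_add' := φadd
        commutes' := fun t => by
          simp only [Algebra.algebraMap_eq_smul_one]
          rw [φsmul, φ1] }
    let Φ : A ≃ₐ[ℝ] A := AlgEquiv.ofBijective Φa ⟨φinj, φsurj⟩
    have hΦcoe : ∀ f, Φ f = φ f := fun f => rfl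
    let Yl : A →ₗ[ℝ] A :=
      { toFun := fun a => ψ (Φ.symm a)
        map_add' := fun a b => by
          show ψ (Φ.symm (a + b)) = ψ (Φ.symm a) + ψ (Φ.symm b)
          rw [map_add, ψadd]
        map_smul' := fun t a => by
          show ψ (Φ.symm (t • a)) = t • ψ (Φ.symm a)
          rw [map_smul, ψsmul] }
    let Y : Derivation ℝ A A :=
      { toLinearMap := Yl
        map_one_eq_zero' := by
          show ψ (Φ.symm 1) = 0
          rw [map_one, ψ1]
        leibniz' := fun a b => by
          show ψ (Φ.symm (a * b)) = a • ψ (Φ.symm b) + b • ψ (Φ.symm a)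
          rw [map_mul, ψmul]
          have ha : φ (Φ.symm a) = a := Φ.apply_symm_apply a
          have hb : φ (Φ.symm b) = b := Φ.apply_symm_apply b
          rw [ha, hb, smul_eq_mul, smul_eq_mul]
          ring }
    refine ⟨Y, Φ, ?_⟩
    funext b
    have hsplit : U b = U (inl b.fst) + U (inr b.snd) := by
      rw [← hadd]; congr 1; exact (inl_fst_add_inr_snd_eq b).symm
    rw [hsplit, hUinl, hUinr]
    have hY : ∀ f, (Y : A → A) (φ f) = ψ f := fun f => by
      show ψ (Φ.symm (φ f)) = ψ f
      have hf : φ f = Φ f := rfl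
      rw [hf, Φ.symm_apply_apply]
    refine TrivSqZeroExt.ext ?_ ?_ <;>
      simp [fst_dualNumberAut, snd_dualNumberAut, hΦcoe, hY]
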